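/- Let {X; w₁,…,w_N} be a system of contractions on a complete partial metric space (X,p) with common contraction factor s < 1. Then W : H_p(X) → H_p(X), W(B) = ⋃_{j=1}^N wⱼ(B), satisfies h_p(W(A), W(B)) ≤ s·h_p(A,B) for all nonempty compact A,B, i.e. W is an s-contraction on the hyperspace with the Hausdorff partial metric. -/

import Mathlib

open Filter Topology Set ENNReal

/-- A partial metric on `X` (Matthews' axioms P1–P4). -/
structure PartialMetricOn (X : Type*) where
  p : X → X → ℝ
  nonneg_self : ∀ x, 0 ≤ p x x
  self_le : ∀ x y, p x x ≤ p x y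
  eq_of_indist : ∀ x y, p x x = p x y → p x y = p y y → x = y
  symm : ∀ x y, p x y = p y x
  triangle : ∀ x y z, p x z ≤ p x y + p y z - p y y

variable {X : Type*}

/-- A sequence is Cauchy if `p (a m) (a n)` converges as `m, n → ∞`. -/
def PartialMetricOn.IsCauchySeq (P : PartialMetricOn X) (a : ℕ → X) : Prop :=
  ∃ l : ℝ, Tendsto (fun mn : ℕ × ℕ => P.p (a mn.1) (a mn.2)) atTop (nhds l)

/-- Convergence in a partial metric space: `lim p (a n) x = p x x`. -/
def PartialMetricOn.ConvergesTo (P : PartialMetricOn X) (a : ℕ → X) (x : X) : Prop :=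
  Tendsto (fun n => P.p (a n) x) atTop (nhds (P.p x x))

/-- Completeness: every Cauchy sequence converges, with `lim p (a m) (a n) = p x x`. -/
def PartialMetricOn.Complete (P : PartialMetricOn X) : Prop :=
  ∀ a : ℕ → X, P.IsCauchySeq a → ∃ x, P.ConvergesTo a x ∧
    Tendsto (fun mn : ℕ × ℕ => P.p (a mn.1) (a mn.2)) atTop (nhds (P.p x x))

/-- The topology induced by a partial metric, generated by the open balls
`{y | p x y < p x x + ε}`. -/
def PartialMetricOn.topology (P : PartialMetricOn X) : TopologicalSpace X :=
  TopologicalSpace.generateFrom {s | ∃ x ε, 0 < ε ∧ s = {y | P.p x y < P.p x x + ε}}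

/-- The Lipschitz constant `Lip_p f = sup_{x ≠ y} p (f x) (f y) / p x y ∈ [0,∞]`. -/
noncomputable def PartialMetricOn.lip (P : PartialMetricOn X) (f : X → X) : ℝ≥0∞ :=
  ⨆ q : {q : X × X // q.1 ≠ q.2}, ENNReal.ofReal (P.p (f q.1.1) (f q.1.2) / P.p q.1.1 q.1.2)

/-- The diameter `diam A = sup_{x,y ∈ A} p x y ∈ [0,∞]`. -/
noncomputable def PartialMetricOn.diam (P : PartialMetricOn X) (A : Set X) : ℝ≥0∞ :=
  ⨆ x ∈ A, ⨆ y ∈ A, ENNReal.ofReal (P.p x y)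

/-- `ρ_p(A,B) = sup_{x ∈ A} inf_{y ∈ B} p x y`. -/
noncomputable def PartialMetricOn.rho (P : PartialMetricOn X) (A B : Set X) : ℝ :=
  sSup ((fun x => sInf ((fun y => P.p x y) '' B)) '' A)

/-- The Hausdorff partial metric `h_p(A,B) = max {ρ_p(A,B), ρ_p(B,A)}`. -/
noncomputable def PartialMetricOn.hp (P : PartialMetricOn X) (A B : Set X) : ℝ :=
  max (P.rho A B) (P.rho B A)

/-- `wordComp f w m = f_{w 0} ∘⋯-style composition: the map `f_{[w]_m}`. -/
def wordComp {ι : Type*} (f : ι → X → X) (w : ℕ → ι) : ℕ → X → X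
  | 0 => id
  | (m+1) => (wordComp f w m) ∘ (f (w m))


/-!
A contraction pulls every point of `w j (A)` at least `s` times closer to `w j (B) ⊆ W(B)` than
its preimage was to `B`, so `p(w j a, W B) ≤ s · p(a, B)`; taking suprema over `a ∈ A` gives
`ρ_p(W A, W B) ≤ s · ρ_p(A, B)`, and symmetrising gives the claim for `h_p`. Compact sets are
`p`-bounded, so the suprema are genuine; `sSup` of an unbounded set of reals would be `0`.
-/

namespace PartialMetricOn

variable (P : PartialMetricOn X)

noncomputable def infDist (x : X) (B : Set X) : ℝ :=
  sInf ((fun y => P.p x y) '' B)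

lemma rho_eq_sSup_infDist (A B : Set X) : P.rho A B = sSup ((fun x => P.infDist x B) '' A) :=
  rfl

lemma p_nonneg (x y : X) : 0 ≤ P.p x y :=
  (P.nonneg_self x).trans (P.self_le x y)

lemma infDist_nonneg (x : X) (B : Set X) : 0 ≤ P.infDist x B :=
  Real.sInf_nonneg (by rintro _ ⟨y, -, rfl⟩; exact P.p_nonneg x y)

lemma infDist_le_p {x y : X} {B : Set X} (hy : y ∈ B) : P.infDist x B ≤ P.p x y :=
  csInf_le ⟨0, by rintro _ ⟨z, -, rfl⟩; exact P.p_nonneg x z⟩ ⟨y, hy, rfl⟩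

lemma rho_nonneg (A B : Set X) : 0 ≤ P.rho A B :=
  Real.sSup_nonneg (by rintro _ ⟨x, -, rfl⟩; exact P.infDist_nonneg x B)

lemma exists_p_le_of_isCompact {A : Set X} (hA : @IsCompact X P.topology A) (y : X) :
    ∃ M, ∀ x ∈ A, P.p x y ≤ M := by
  let := P.topology
  obtain ⟨t, ht⟩ := hA.elim_finite_subcover (fun a : X => {x | P.p a x < P.p a a + 1})
    (fun a => TopologicalSpace.isOpen_generateFrom_of_mem ⟨a, 1, one_pos, rfl⟩)
    (fun x _ => mem_iUnion.2 ⟨x, lt_add_one (P.p x x)⟩)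
  refine ⟨∑ a ∈ t, (1 + P.p a y), fun x hx => ?_⟩
  obtain ⟨a, ha, hxa⟩ := mem_iUnion₂.1 (ht hx)
  have h_near : P.p x a < P.p a a + 1 := P.symm x a ▸ hxa
  have h_term : 1 + P.p a y ≤ ∑ a ∈ t, (1 + P.p a y) :=
    Finset.single_le_sum (fun b _ => add_nonneg zero_le_one (P.p_nonneg b y)) ha
  linarith [P.triangle x a y]

lemma bddAbove_infDist_image_of_isCompact {A B : Set X} (hA : @IsCompact X P.topology A)
    (hB : B.Nonempty) : BddAbove ((fun x => P.infDist x B) '' A) := by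
  obtain ⟨b, hb⟩ := hB
  obtain ⟨M, hM⟩ := P.exists_p_le_of_isCompact hA b
  exact ⟨M, by rintro _ ⟨x, hx, rfl⟩; exact (P.infDist_le_p hb).trans (hM x hx)⟩

lemma infDist_map_le {f : X → X} {s : ℝ} (hs : 0 ≤ s)
    (hf : ∀ x y, P.p (f x) (f y) ≤ s * P.p x y) {B C : Set X} (hB : B.Nonempty) (hBC : f '' B ⊆ C) (x : X) :
    P.infDist (f x) C ≤ s * P.infDist x B := by
  unfold infDist
  rw [← smul_eq_mul, ← Real.sInf_smul_of_nonneg hs, ← image_smul, image_image]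
  refine le_csInf (hB.image _) ?_
  rintro _ ⟨y, hy, rfl⟩
  exact (P.infDist_le_p (hBC (mem_image_of_mem f hy))).trans (hf x y)

lemma rho_iUnion_image_le {ι : Type*} (w : ι → X → X) {s : ℝ} (hs : 0 ≤ s)
    (hw : ∀ j x y, P.p (w j x) (w j y) ≤ s * P.p x y) {A B : Set X}
    (hA : @IsCompact X P.topology A) (hB : B.Nonempty) :
    P.rho (⋃ j, w j '' A) (⋃ j, w j '' B) ≤ s * P.rho A B := by
  rw [rho_eq_sSup_infDist]
  refine Real.sSup_le ?_ (mul_nonneg hs (P.rho_nonneg A B))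
  rintro _ ⟨_, hx, rfl⟩
  obtain ⟨j, a, ha, rfl⟩ := mem_iUnion.1 hx
  calc P.infDist (w j a) (⋃ j, w j '' B)
      ≤ s * P.infDist a B := P.infDist_map_le hs (hw j) hB (subset_iUnion (fun j => w j '' B) j) a
    _ ≤ s * P.rho A B :=
        mul_le_mul_of_nonneg_left
          (le_csSup (P.bddAbove_infDist_image_of_isCompact hA hB) ⟨a, ha, rfl⟩) hs

end PartialMetricOn

theorem stmt19_general {N : ℕ} (P : PartialMetricOn X)
    (w : Fin N → X → X) (s : ℝ) (hs0 : 0 ≤ s)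
    (hw : ∀ j x y, P.p (w j x) (w j y) ≤ s * P.p x y)
    (A B : Set X) (hA : A.Nonempty) (hAc : @IsCompact X P.topology A)
    (hB : B.Nonempty) (hBc : @IsCompact X P.topology B) :
    P.hp (⋃ j, w j '' A) (⋃ j, w j '' B) ≤ s * P.hp A B := by
  rw [PartialMetricOn.hp, PartialMetricOn.hp, mul_max_of_nonneg _ _ hs0]
  exact max_le_max (P.rho_iUnion_image_le w hs0 hw hAc hB) (P.rho_iUnion_image_le w hs0 hw hBc hA)

theorem stmt19 {N : ℕ} (P : PartialMetricOn X) (hC : P.Complete)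
    (w : Fin N → X → X) (s : ℝ) (hs0 : 0 ≤ s) (hs1 : s < 1)
    (hw : ∀ j x y, P.p (w j x) (w j y) ≤ s * P.p x y)
    (A B : Set X) (hA : A.Nonempty) (hAc : @IsCompact X P.topology A)
    (hB : B.Nonempty) (hBc : @IsCompact X P.topology B) :
    P.hp (⋃ j, w j '' A) (⋃ j, w j '' B) ≤ s * P.hp A B :=
  stmt19_general P w s hs0 hw A B hA hAc hB hBc
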